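/- arXiv:1709.01281 — 3 statements merged into one kernel-verified Lean document; each statement's English description precedes it below -/
import Mathlib

section
/- Let n ≥ 1 and p > 1. There exists a constant C₁ > 0, depending only on p, such that for all vectors η, η' ∈ ℝ^n with |η| + |η'| > 0, one has ⟨|η|^{p−2} η − |η'|^{p−2} η', η − η'⟩ ≥ C₁ (|η| + |η'|)^{p−2} |η − η'|². -/
/-!
Put `a = ‖η‖`, `b = ‖η'‖` and `s = a b - ⟪η, η'⟫ ≥ 0`. Then `‖η - η'‖² = (a - b)² + 2 s` and the
left-hand side equals `(a^{p-1} - b^{p-1}) (a - b) + (a^{p-2} + b^{p-2}) s`, so for `b ≤ a` everything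
reduces to `a^{p-1} - b^{p-1} ≥ c (a + b)^{p-2} (a - b)` and `a^{p-2} ≥ c (a + b)^{p-2}`. For `p ≤ 2`
the first is the tangent-line inequality of the concave `x ↦ x^{p-1}` at `a` and the second
is `a ≤ a + b`; for `p ≥ 2` the first follows from `b^{p-2} ≤ a^{p-2}` and the second from
`a + b ≤ 2 a`.
-/

open Real

namespace Real

lemma sub_one_mul_rpow_sub_two_mul_sub_le {p a b : ℝ} (hp : 1 ≤ p) (hp2 : p ≤ 2)
    (ha : 0 < a) (hb : 0 ≤ b) :
    (p - 1) * a ^ (p - 2) * (a - b) ≤ a ^ (p - 1) - b ^ (p - 1) := by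
  have bernoulli := rpow_one_add_le_one_add_mul_self (s := b / a - 1)
    (by linarith [div_nonneg hb ha.le]) (by linarith : 0 ≤ p - 1) (by linarith : p - 1 ≤ 1)
  rw [add_sub_cancel, div_rpow hb ha.le, div_le_iff₀ (by positivity)] at bernoulli
  have ha' : a ^ (p - 1) = a ^ (p - 2) * a := by
    rw [← rpow_add_one ha.ne']; ring_nf
  rw [ha'] at bernoulli ⊢
  have : a ^ (p - 2) * a * (b / a) = a ^ (p - 2) * b := by field_simp
  nlinarith

lemma rpow_sub_two_mul_sub_le {p a b : ℝ} (hp2 : 2 ≤ p) (hb : 0 ≤ b) (hba : b ≤ a) :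
    a ^ (p - 2) * (a - b) ≤ a ^ (p - 1) - b ^ (p - 1) := by
  have hpow (x : ℝ) (hx : 0 ≤ x) : x ^ (p - 1) = x ^ (p - 2) * x := by
    rw [← rpow_add_one' hx (by linarith)]; ring_nf
  have hmono : b ^ (p - 2) ≤ a ^ (p - 2) := rpow_le_rpow hb hba (by linarith)
  rw [hpow a (hb.trans hba), hpow b hb]
  nlinarith

lemma min_one_mul_rpow_sub_two_le {p a b : ℝ} (ha : 0 < a) (hb : 0 ≤ b) (hba : b ≤ a) :
    min 1 (2 ^ (2 - p)) * (a + b) ^ (p - 2) ≤ a ^ (p - 2) := by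
  rcases le_total p 2 with hp2 | hp2
  · calc min 1 (2 ^ (2 - p)) * (a + b) ^ (p - 2) ≤ 1 * a ^ (p - 2) :=
          mul_le_mul (min_le_left _ _) (rpow_le_rpow_of_nonpos ha (by linarith) (by linarith))
            (by positivity) zero_le_one
      _ = a ^ (p - 2) := one_mul _
  · calc min 1 (2 ^ (2 - p)) * (a + b) ^ (p - 2) ≤ 2 ^ (2 - p) * (2 * a) ^ (p - 2) := by
          gcongr
          · exact min_le_right _ _
          · linarith
      _ = a ^ (p - 2) := by
          rw [mul_rpow zero_le_two ha.le, ← mul_assoc, ← rpow_add zero_lt_two]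
          simp

lemma min_one_mul_rpow_sub_two_mul_sub_le {p a b : ℝ} (hp : 1 < p) (ha : 0 < a) (hb : 0 ≤ b)
    (hba : b ≤ a) : min 1 (p - 1) * a ^ (p - 2) * (a - b) ≤ a ^ (p - 1) - b ^ (p - 1) := by
  have hnonneg : 0 ≤ a ^ (p - 2) * (a - b) := mul_nonneg (by positivity) (by linarith)
  rcases le_total p 2 with hp2 | hp2
  · calc min 1 (p - 1) * a ^ (p - 2) * (a - b) ≤ (p - 1) * a ^ (p - 2) * (a - b) := by
          rw [mul_assoc, mul_assoc]; exact mul_le_mul_of_nonneg_right (min_le_right _ _) hnonneg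
      _ ≤ a ^ (p - 1) - b ^ (p - 1) :=
          sub_one_mul_rpow_sub_two_mul_sub_le hp.le hp2 ha hb
  · calc min 1 (p - 1) * a ^ (p - 2) * (a - b) ≤ a ^ (p - 2) * (a - b) := by
          rw [mul_assoc]; exact mul_le_of_le_one_left hnonneg (min_le_left _ _)
      _ ≤ a ^ (p - 1) - b ^ (p - 1) := rpow_sub_two_mul_sub_le hp2 hb hba

end Real

noncomputable def pLaplaceConst (p : ℝ) : ℝ := min 1 (p - 1) * min 1 (2 ^ (2 - p))

lemma pLaplaceConst_pos {p : ℝ} (hp : 1 < p) : 0 < pLaplaceConst p :=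
  mul_pos (lt_min one_pos (by linarith)) (lt_min one_pos (by positivity))

lemma pLaplaceConst_le (p : ℝ) : pLaplaceConst p ≤ min 1 (2 ^ (2 - p)) :=
  mul_le_of_le_one_left (le_min zero_le_one (by positivity)) (min_le_left _ _)

lemma pLaplaceConst_mul_le {p a b s : ℝ} (hp : 1 < p) (ha : 0 ≤ a) (hb : 0 ≤ b) (hab : 0 < a + b)
    (hs : 0 ≤ s) :
    pLaplaceConst p / 2 * (a + b) ^ (p - 2) * ((a - b) ^ 2 + 2 * s) ≤
      (a ^ (p - 1) - b ^ (p - 1)) * (a - b) + (a ^ (p - 2) + b ^ (p - 2)) * s := by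
  wlog hba : b ≤ a generalizing a b
  · convert this hb ha (by linarith) (by linarith) using 1 <;> ring_nf
  have ha' : 0 < a := by linarith
  have hX : 0 ≤ pLaplaceConst p * (a + b) ^ (p - 2) :=
    mul_nonneg (pLaplaceConst_pos hp).le (by positivity)
  have hmono : pLaplaceConst p * (a + b) ^ (p - 2) * (a - b) ≤ a ^ (p - 1) - b ^ (p - 1) :=
    calc pLaplaceConst p * (a + b) ^ (p - 2) * (a - b)
        = min 1 (p - 1) * (min 1 (2 ^ (2 - p)) * (a + b) ^ (p - 2)) * (a - b) := by
          unfold pLaplaceConst; ring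
      _ ≤ min 1 (p - 1) * a ^ (p - 2) * (a - b) :=
          mul_le_mul_of_nonneg_right (mul_le_mul_of_nonneg_left
            (min_one_mul_rpow_sub_two_le ha' hb hba) (le_min zero_le_one (by linarith)))
            (sub_nonneg.2 hba)
      _ ≤ a ^ (p - 1) - b ^ (p - 1) := min_one_mul_rpow_sub_two_mul_sub_le hp ha' hb hba
  have hslope : pLaplaceConst p * (a + b) ^ (p - 2) ≤ a ^ (p - 2) + b ^ (p - 2) :=
    calc pLaplaceConst p * (a + b) ^ (p - 2) ≤ min 1 (2 ^ (2 - p)) * (a + b) ^ (p - 2) := by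
          gcongr; exact pLaplaceConst_le p
      _ ≤ a ^ (p - 2) := min_one_mul_rpow_sub_two_le ha' hb hba
      _ ≤ a ^ (p - 2) + b ^ (p - 2) := le_add_of_nonneg_right (by positivity)
  nlinarith [mul_le_mul_of_nonneg_right hmono (sub_nonneg.2 hba),
    mul_le_mul_of_nonneg_right hslope hs, mul_nonneg hX (sq_nonneg (a - b))]

lemma inner_rpow_smul_sub_rpow_smul {E : Type*} [NormedAddCommGroup E] [InnerProductSpace ℝ E]
    {p : ℝ} (hp : p ≠ 1) (x y : E) :
    inner ℝ (‖x‖ ^ (p - 2) • x - ‖y‖ ^ (p - 2) • y) (x - y) =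
      (‖x‖ ^ (p - 1) - ‖y‖ ^ (p - 1)) * (‖x‖ - ‖y‖) +
        (‖x‖ ^ (p - 2) + ‖y‖ ^ (p - 2)) * (‖x‖ * ‖y‖ - inner ℝ x y) := by
  have hpow (z : E) : ‖z‖ ^ (p - 1) = ‖z‖ ^ (p - 2) * ‖z‖ := by
    rw [← rpow_add_one' (norm_nonneg z) (by contrapose! hp; linarith)]; ring_nf
  simp only [inner_sub_left, inner_sub_right, real_inner_smul_left, real_inner_self_eq_norm_sq,
    real_inner_comm x y, hpow]
  ring

/-- For `p > 1` there is `C₁ > 0`, depending only on `p`, such that for all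
`η, η'` in `ℝ^n` (any `n ≥ 1`) with `|η| + |η'| > 0`,
`⟨|η|^{p-2} η − |η'|^{p-2} η', η − η'⟩ ≥ C₁ (|η| + |η'|)^{p-2} |η − η'|²`. -/
theorem stmt5 (p : ℝ) (hp : 1 < p) :
    ∃ C₁ : ℝ, 0 < C₁ ∧ ∀ (n : ℕ), 1 ≤ n →
      ∀ η η' : EuclideanSpace ℝ (Fin n), 0 < ‖η‖ + ‖η'‖ →
        C₁ * (‖η‖ + ‖η'‖) ^ (p - 2) * ‖η - η'‖ ^ (2 : ℝ) ≤
          (inner ℝ ((‖η‖ ^ (p - 2) : ℝ) • η - (‖η'‖ ^ (p - 2) : ℝ) • η') (η - η') : ℝ) := by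
  refine ⟨pLaplaceConst p / 2, by linarith [pLaplaceConst_pos hp], fun n _ η η' hpos => ?_⟩
  have hsq : ‖η - η'‖ ^ (2 : ℝ) = (‖η‖ - ‖η'‖) ^ 2 + 2 * (‖η‖ * ‖η'‖ - inner ℝ η η') := by
    rw [rpow_two, norm_sub_sq_real]; ring
  rw [hsq, inner_rpow_smul_sub_rpow_smul hp.ne' η η']
  exact pLaplaceConst_mul_le hp (norm_nonneg η) (norm_nonneg η') hpos
    (sub_nonneg.2 (real_inner_le_norm η η'))
end

section
/- Let n ≥ 1 and p > 1. There exists a constant C₂ > 0, depending only on p, such that for all vectors η, η' ∈ ℝ^n with |η| + |η'| > 0, one has | |η|^{p−2} η − |η'|^{p−2} η' | ≤ C₂ (|η| + |η'|)^{p−2} |η − η'|. -/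
/-!
Write `a = ‖u‖ ≥ b = ‖v‖`, `d = ‖u - v‖ ≥ a - b` and
`a^(p-2) u - b^(p-2) v = a^(p-2) (u - v) + (a^(p-2) - b^(p-2)) v`.
For `p ≥ 2`, Bernoulli's inequality for the exponent `p - 1` bounds `(a^(p-2) - b^(p-2)) b` by
`(p - 2) a^(p-2) (a - b)`, so the constant `p - 1` works. For `p < 2` the weight `t^(p-2)` is
decreasing: if `a < 2b`, expand around `b^(p-2)` instead and use `b^(p-1) ≤ a^(p-1)`; if `a ≥ 2b`,
then `d ≥ a / 2` and the crude bound `a^(p-1) + b^(p-1)` suffices. In either case the relevant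
norm is comparable to `a + b`, which gives the constant `8`.
-/

open Real

namespace Real

lemma rpow_sub_two_mul_self {p b : ℝ} (hp : 1 < p) (hb : 0 ≤ b) :
    b ^ (p - 2) * b = b ^ (p - 1) := by
  rw [← rpow_add_one' hb (by linarith)]; ring_nf

lemma rpow_sub_two_mul_self_le {p a b : ℝ} (hp : 1 < p) (hb : 0 ≤ b) (hba : b ≤ a) :
    b ^ (p - 2) * b ≤ a ^ (p - 2) * a := by
  rw [rpow_sub_two_mul_self hp hb, rpow_sub_two_mul_self hp (hb.trans hba)]
  exact rpow_le_rpow hb hba (by linarith)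

lemma rpow_sub_two_sub_mul_le {p a b : ℝ} (hp : 2 ≤ p) (hb : 0 ≤ b) (hba : b ≤ a) :
    (a ^ (p - 2) - b ^ (p - 2)) * b ≤ (p - 2) * a ^ (p - 2) * (a - b) := by
  rcases hb.eq_or_lt with rfl | hb'
  · simp only [mul_zero, sub_zero]; positivity
  have ha : 0 < a := hb'.trans_le hba
  have bernoulli : 1 + (p - 1) * (b / a - 1) ≤ (1 + (b / a - 1)) ^ (p - 1) :=
    one_add_mul_self_le_rpow_one_add (by linarith [div_nonneg hb ha.le]) (by linarith)
  rw [add_sub_cancel, div_rpow hb ha.le, le_div_iff₀ (rpow_pos_of_pos ha _),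
    ← rpow_sub_two_mul_self (by linarith) hb, ← rpow_sub_two_mul_self (by linarith) ha.le]
    at bernoulli
  have key : a ^ (p - 2) * a + (p - 1) * a ^ (p - 2) * (b - a) ≤ b ^ (p - 2) * b := by
    refine le_of_eq_of_le ?_ bernoulli
    field_simp
  linarith

lemma rpow_le_mul_rpow_of_le_mul {s c u v : ℝ} (hs₁ : -1 ≤ s) (hs₀ : s ≤ 0) (hc : 1 ≤ c)
    (hu : 0 < u) (hv : v ≤ c * u) (hv₀ : 0 < v) : u ^ s ≤ c * v ^ s := by
  have hcu : c ^ s * u ^ s ≤ v ^ s := by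
    rw [← mul_rpow (by linarith) hu.le]; exact rpow_le_rpow_of_nonpos hv₀ hv hs₀
  have hcs : c ^ (-s) ≤ c := rpow_le_self_of_one_le hc (by linarith)
  calc u ^ s = c ^ (-s) * (c ^ s * u ^ s) := by
        rw [← mul_assoc, ← rpow_add (by linarith)]; simp
    _ ≤ c * v ^ s := by gcongr

end Real

section NormedSpace

variable {E : Type*} [NormedAddCommGroup E] [NormedSpace ℝ E]

lemma norm_smul_sub_smul_le (x y : ℝ) (u v : E) :
    ‖x • u - y • v‖ ≤ |x| * ‖u - v‖ + |x - y| * ‖v‖ := by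
  calc ‖x • u - y • v‖ = ‖x • (u - v) + (x - y) • v‖ := by
        rw [smul_sub, sub_smul]; abel_nf
    _ ≤ |x| * ‖u - v‖ + |x - y| * ‖v‖ := by
        refine (norm_add_le _ _).trans_eq ?_
        rw [norm_smul, norm_smul, norm_eq_abs, norm_eq_abs]

variable {p : ℝ} {u v : E}

lemma norm_rpow_smul_sub_le_of_two_le (hp : 2 ≤ p) (hvu : ‖v‖ ≤ ‖u‖) :
    ‖‖u‖ ^ (p - 2) • u - ‖v‖ ^ (p - 2) • v‖ ≤ (p - 1) * (‖u‖ + ‖v‖) ^ (p - 2) * ‖u - v‖ := by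
  have hd : ‖u‖ - ‖v‖ ≤ ‖u - v‖ := norm_sub_norm_le u v
  have hpow : ‖v‖ ^ (p - 2) ≤ ‖u‖ ^ (p - 2) := rpow_le_rpow (norm_nonneg v) hvu (by linarith)
  calc _ ≤ ‖u‖ ^ (p - 2) * ‖u - v‖ + (‖u‖ ^ (p - 2) - ‖v‖ ^ (p - 2)) * ‖v‖ := by
        have := norm_smul_sub_smul_le (‖u‖ ^ (p - 2)) (‖v‖ ^ (p - 2)) u v
        rwa [abs_of_nonneg (by positivity), abs_of_nonneg (sub_nonneg.2 hpow)] at this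
    _ ≤ ‖u‖ ^ (p - 2) * ‖u - v‖ + (p - 2) * ‖u‖ ^ (p - 2) * (‖u‖ - ‖v‖) := by
        grw [rpow_sub_two_sub_mul_le hp (norm_nonneg v) hvu]
    _ ≤ (p - 1) * ‖u‖ ^ (p - 2) * ‖u - v‖ := by
        have : 0 ≤ (p - 2) * ‖u‖ ^ (p - 2) := mul_nonneg (by linarith) (by positivity)
        nlinarith
    _ ≤ (p - 1) * (‖u‖ + ‖v‖) ^ (p - 2) * ‖u - v‖ := by
        have : ‖u‖ ^ (p - 2) ≤ (‖u‖ + ‖v‖) ^ (p - 2) :=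
          rpow_le_rpow (norm_nonneg u) (le_add_of_nonneg_right (norm_nonneg v)) (by linarith)
        gcongr; linarith

lemma norm_rpow_smul_sub_le_of_le_two (hp₁ : 1 < p) (hp₂ : p ≤ 2) (hvu : ‖v‖ ≤ ‖u‖)
    (hu : 0 < ‖u‖) :
    ‖‖u‖ ^ (p - 2) • u - ‖v‖ ^ (p - 2) • v‖ ≤ 8 * (‖u‖ + ‖v‖) ^ (p - 2) * ‖u - v‖ := by
  have hd : ‖u‖ - ‖v‖ ≤ ‖u - v‖ := norm_sub_norm_le u v
  have hpow : ‖v‖ ^ (p - 2) * ‖v‖ ≤ ‖u‖ ^ (p - 2) * ‖u‖ :=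
    rpow_sub_two_mul_self_le hp₁ (norm_nonneg v) hvu
  have hsum : 0 < ‖u‖ + ‖v‖ := by positivity
  rcases lt_or_ge ‖u‖ (2 * ‖v‖) with hcomp | hsmall
  · have hv : 0 < ‖v‖ := by linarith
    have hmono : ‖u‖ ^ (p - 2) ≤ ‖v‖ ^ (p - 2) := rpow_le_rpow_of_nonpos hv hvu (by linarith)
    have hcmp : ‖v‖ ^ (p - 2) ≤ 4 * (‖u‖ + ‖v‖) ^ (p - 2) :=
      rpow_le_mul_rpow_of_le_mul (by linarith) (by linarith) (by norm_num) hv (by linarith) hsum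
    calc _ ≤ ‖v‖ ^ (p - 2) * ‖u - v‖ + (‖v‖ ^ (p - 2) - ‖u‖ ^ (p - 2)) * ‖u‖ := by
          have := norm_smul_sub_smul_le (‖v‖ ^ (p - 2)) (‖u‖ ^ (p - 2)) v u
          rwa [abs_of_nonneg (by positivity), abs_of_nonneg (sub_nonneg.2 hmono), norm_sub_rev,
            norm_sub_rev v] at this
      _ ≤ 2 * ‖v‖ ^ (p - 2) * ‖u - v‖ := by nlinarith [rpow_nonneg (norm_nonneg v) (p - 2)]
      _ ≤ 8 * (‖u‖ + ‖v‖) ^ (p - 2) * ‖u - v‖ := by nlinarith [norm_nonneg (u - v)]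
  · have hcmp : ‖u‖ ^ (p - 2) ≤ 2 * (‖u‖ + ‖v‖) ^ (p - 2) :=
      rpow_le_mul_rpow_of_le_mul (by linarith) (by linarith) (by norm_num) hu (by linarith) hsum
    calc _ ≤ ‖u‖ ^ (p - 2) * ‖u‖ + ‖v‖ ^ (p - 2) * ‖v‖ := by
          refine (norm_sub_le _ _).trans_eq ?_
          rw [norm_smul, norm_smul, norm_of_nonneg (by positivity), norm_of_nonneg (by positivity)]
      _ ≤ 4 * ‖u‖ ^ (p - 2) * ‖u - v‖ := by nlinarith [rpow_nonneg (norm_nonneg u) (p - 2)]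
      _ ≤ 8 * (‖u‖ + ‖v‖) ^ (p - 2) * ‖u - v‖ := by nlinarith [norm_nonneg (u - v)]

lemma norm_rpow_smul_sub_rpow_smul_le (hp : 1 < p) (hpos : 0 < ‖u‖ + ‖v‖) :
    ‖‖u‖ ^ (p - 2) • u - ‖v‖ ^ (p - 2) • v‖ ≤
      max (p - 1) 8 * (‖u‖ + ‖v‖) ^ (p - 2) * ‖u - v‖ := by
  wlog hvu : ‖v‖ ≤ ‖u‖ generalizing u v
  · rw [norm_sub_rev, add_comm, norm_sub_rev u]
    exact this (by rwa [add_comm]) (le_of_not_ge hvu)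
  have hu : 0 < ‖u‖ := by linarith [norm_nonneg v]
  rcases le_total 2 p with hp₂ | hp₂
  · grw [norm_rpow_smul_sub_le_of_two_le hp₂ hvu, mul_assoc, ← le_max_left (p - 1) 8, mul_assoc]
  · grw [norm_rpow_smul_sub_le_of_le_two hp hp₂ hvu hu, mul_assoc, ← le_max_right (p - 1) 8,
      mul_assoc]

end NormedSpace

/-- For `p > 1` there is `C₂ > 0`, depending only on `p`, such that for all
`η, η'` in `ℝ^n` (any `n ≥ 1`) with `|η| + |η'| > 0`,
`| |η|^{p-2} η − |η'|^{p-2} η' | ≤ C₂ (|η| + |η'|)^{p-2} |η − η'|`. -/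
theorem stmt6 (p : ℝ) (hp : 1 < p) :
    ∃ C₂ : ℝ, 0 < C₂ ∧ ∀ (n : ℕ), 1 ≤ n →
      ∀ η η' : EuclideanSpace ℝ (Fin n), 0 < ‖η‖ + ‖η'‖ →
        ‖(‖η‖ ^ (p - 2) : ℝ) • η - (‖η'‖ ^ (p - 2) : ℝ) • η'‖ ≤
          C₂ * (‖η‖ + ‖η'‖) ^ (p - 2) * ‖η - η'‖ := by
  exact ⟨max (p - 1) 8, by positivity, fun _ _ _ _ ↦ norm_rpow_smul_sub_rpow_smul_le hp⟩
end

section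
/- Let n ≥ 1 and 1 < p ≤ 2. There exists a constant C₄ > 0, depending only on p, such that for all vectors η, η' ∈ ℝ^n with |η| + |η'| > 0, one has | |η|^{p−2} η − |η'|^{p−2} η' | ≤ C₄ |η − η'|^{p−1}. -/
/-!
Put `q = p - 1 ∈ (0, 1]` and `u = |η|^{q-1} η`, so that `|u| = |η|^q` and `u` makes the same angle
with `u'` as `η` with `η'`. By the law of cosines, with `κ` the cosine of that angle,
`a² + b² - 2abκ = θ (a - b)² + (1 - θ) (a + b)²` for `θ = (1 + κ)/2`. In the two collinear cases the
estimate is `|s^q - t^q| ≤ |s - t|^q` and `s^q + t^q ≤ 2^{1-q} (s + t)^q`, and concavity of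
`x ↦ x^q` interpolates between them. This gives the constant `C₄ = 2^{2-p}`.
-/

open Real InnerProductGeometry

namespace Real

def lawOfCosines (a b κ : ℝ) : ℝ := a ^ 2 + b ^ 2 - 2 * a * b * κ

lemma lawOfCosines_eq_convexComb (a b κ : ℝ) :
    lawOfCosines a b κ = (1 + κ) / 2 * (a - b) ^ 2 + (1 - (1 + κ) / 2) * (a + b) ^ 2 := by
  unfold lawOfCosines; ring

section

variable {q s t : ℝ}

lemma abs_rpow_sub_rpow_le (hq0 : 0 ≤ q) (hq1 : q ≤ 1) (hs : 0 ≤ s) (ht : 0 ≤ t) :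
    |s ^ q - t ^ q| ≤ |s - t| ^ q := by
  wlog hts : t ≤ s generalizing s t
  · rw [abs_sub_comm, abs_sub_comm s t]
    exact this ht hs (le_of_not_ge hts)
  have hsub : s ^ q ≤ (s - t) ^ q + t ^ q := by
    simpa using rpow_add_le_add_rpow (sub_nonneg.2 hts) ht hq0 hq1
  have hmono : t ^ q ≤ s ^ q := rpow_le_rpow ht hts hq0
  rw [abs_of_nonneg (sub_nonneg.2 hmono), abs_of_nonneg (sub_nonneg.2 hts)]
  linarith

lemma rpow_add_rpow_le_two_rpow_mul (hq0 : 0 ≤ q) (hq1 : q ≤ 1) (hs : 0 ≤ s) (ht : 0 ≤ t) :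
    s ^ q + t ^ q ≤ 2 ^ (1 - q) * (s + t) ^ q := by
  have hmid := (concaveOn_rpow hq0 hq1).2 (Set.mem_Ici.2 hs) (Set.mem_Ici.2 ht)
    (by norm_num : (0 : ℝ) ≤ 1 / 2) (by norm_num : (0 : ℝ) ≤ 1 / 2) (by norm_num)
  simp only [smul_eq_mul, ← mul_add] at hmid
  rw [mul_rpow (by norm_num) (by positivity)] at hmid
  have htwo : 2 * (1 / 2 : ℝ) ^ q = 2 ^ (1 - q) := by
    rw [rpow_sub zero_lt_two, rpow_one, div_rpow zero_le_one zero_le_two, one_rpow, mul_one_div]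
  calc s ^ q + t ^ q = 2 * (1 / 2 * (s ^ q + t ^ q)) := by ring
    _ ≤ 2 * ((1 / 2) ^ q * (s + t) ^ q) := by gcongr
    _ = 2 ^ (1 - q) * (s + t) ^ q := by rw [← htwo, mul_assoc]

lemma sq_rpow_sub_rpow_le (hq0 : 0 ≤ q) (hq1 : q ≤ 1) (hs : 0 ≤ s) (ht : 0 ≤ t) :
    (s ^ q - t ^ q) ^ 2 ≤ ((s - t) ^ 2) ^ q := by
  rw [← sq_abs (s - t), ← rpow_pow_comm (abs_nonneg _), ← sq_abs]
  exact pow_le_pow_left₀ (abs_nonneg _) (abs_rpow_sub_rpow_le hq0 hq1 hs ht) 2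

lemma sq_rpow_add_rpow_le (hq0 : 0 ≤ q) (hq1 : q ≤ 1) (hs : 0 ≤ s) (ht : 0 ≤ t) :
    (s ^ q + t ^ q) ^ 2 ≤ (2 ^ (1 - q)) ^ 2 * ((s + t) ^ 2) ^ q := by
  rw [← rpow_pow_comm (by positivity), ← mul_pow]
  exact pow_le_pow_left₀ (by positivity) (rpow_add_rpow_le_two_rpow_mul hq0 hq1 hs ht) 2

theorem lawOfCosines_rpow_le (hq0 : 0 ≤ q) (hq1 : q ≤ 1) (hs : 0 ≤ s) (ht : 0 ≤ t) {κ : ℝ}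
    (hκ : |κ| ≤ 1) :
    lawOfCosines (s ^ q) (t ^ q) κ ≤ (2 ^ (1 - q)) ^ 2 * lawOfCosines s t κ ^ q := by
  set θ := (1 + κ) / 2 with hθ
  have hθ0 : 0 ≤ θ := by linarith [(abs_le.1 hκ).1]
  have hθ1 : 0 ≤ 1 - θ := by linarith [(abs_le.1 hκ).2]
  have hC : 1 ≤ ((2 : ℝ) ^ (1 - q)) ^ 2 := one_le_pow₀ (one_le_rpow one_le_two (by linarith))
  have hdiff : (s ^ q - t ^ q) ^ 2 ≤ (2 ^ (1 - q)) ^ 2 * ((s - t) ^ 2) ^ q :=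
    (sq_rpow_sub_rpow_le hq0 hq1 hs ht).trans (le_mul_of_one_le_left (by positivity) hC)
  have hconc := (concaveOn_rpow hq0 hq1).2 (Set.mem_Ici.2 (sq_nonneg (s - t)))
    (Set.mem_Ici.2 (sq_nonneg (s + t))) hθ0 hθ1 (add_sub_cancel θ 1)
  simp only [smul_eq_mul] at hconc
  rw [lawOfCosines_eq_convexComb, lawOfCosines_eq_convexComb]
  calc θ * (s ^ q - t ^ q) ^ 2 + (1 - θ) * (s ^ q + t ^ q) ^ 2
      ≤ θ * ((2 ^ (1 - q)) ^ 2 * ((s - t) ^ 2) ^ q)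
          + (1 - θ) * ((2 ^ (1 - q)) ^ 2 * ((s + t) ^ 2) ^ q) := by
        gcongr
        exact sq_rpow_add_rpow_le hq0 hq1 hs ht
    _ = (2 ^ (1 - q)) ^ 2 * (θ * ((s - t) ^ 2) ^ q + (1 - θ) * ((s + t) ^ 2) ^ q) := by ring
    _ ≤ (2 ^ (1 - q)) ^ 2 * (θ * (s - t) ^ 2 + (1 - θ) * (s + t) ^ 2) ^ q := by gcongr

end

end Real

section InnerProductSpace

variable {E : Type*} [NormedAddCommGroup E] [InnerProductSpace ℝ E]

lemma norm_sub_sq_eq_lawOfCosines (x y : E) :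
    ‖x - y‖ ^ 2 = lawOfCosines ‖x‖ ‖y‖ (cos (angle x y)) := by
  simp only [lawOfCosines, sq, norm_sub_sq_eq_norm_sq_add_norm_sq_sub_two_mul_norm_mul_norm_mul_cos_angle]

lemma norm_rpow_sub_one_smul {q : ℝ} (hq : q ≠ 0) (x : E) : ‖‖x‖ ^ (q - 1) • x‖ = ‖x‖ ^ q := by
  rw [norm_smul, norm_of_nonneg (by positivity), ← rpow_add_one' (norm_nonneg x) (by simpa),
    sub_add_cancel]

lemma angle_rpow_smul_left (r : ℝ) (x y : E) : angle (‖x‖ ^ r • x) y = angle x y := by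
  rcases eq_or_ne x 0 with rfl | hx
  · simp
  · exact angle_smul_left_of_pos x y (rpow_pos_of_pos (norm_pos_iff.2 hx) r)

lemma angle_rpow_smul_right (r : ℝ) (x y : E) : angle x (‖y‖ ^ r • y) = angle x y := by
  rw [angle_comm, angle_rpow_smul_left, angle_comm]

theorem norm_rpow_sub_one_smul_sub_le {q : ℝ} (hq0 : 0 < q) (hq1 : q ≤ 1) (x y : E) :
    ‖‖x‖ ^ (q - 1) • x - ‖y‖ ^ (q - 1) • y‖ ≤ 2 ^ (1 - q) * ‖x - y‖ ^ q := by
  have hsq : ‖‖x‖ ^ (q - 1) • x - ‖y‖ ^ (q - 1) • y‖ ^ 2 ≤ (2 ^ (1 - q) * ‖x - y‖ ^ q) ^ 2 := by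
    rw [norm_sub_sq_eq_lawOfCosines, norm_rpow_sub_one_smul hq0.ne', norm_rpow_sub_one_smul hq0.ne',
      angle_rpow_smul_left, angle_rpow_smul_right, mul_pow, rpow_pow_comm (norm_nonneg _),
      norm_sub_sq_eq_lawOfCosines]
    exact lawOfCosines_rpow_le hq0.le hq1 (norm_nonneg x) (norm_nonneg y) (abs_cos_le_one _)
  exact (pow_le_pow_iff_left₀ (norm_nonneg _) (by positivity) two_ne_zero).1 hsq

end InnerProductSpace

/-- For `1 < p ≤ 2` there is `C₄ > 0`, depending only on `p`, such that for all
`η, η'` in `ℝ^n` (any `n ≥ 1`) with `|η| + |η'| > 0`,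
`| |η|^{p-2} η − |η'|^{p-2} η' | ≤ C₄ |η − η'|^{p-1}`. -/
theorem stmt8 (p : ℝ) (hp1 : 1 < p) (hp2 : p ≤ 2) :
    ∃ C₄ : ℝ, 0 < C₄ ∧ ∀ (n : ℕ), 1 ≤ n →
      ∀ η η' : EuclideanSpace ℝ (Fin n), 0 < ‖η‖ + ‖η'‖ →
        ‖(‖η‖ ^ (p - 2) : ℝ) • η - (‖η'‖ ^ (p - 2) : ℝ) • η'‖ ≤
          C₄ * ‖η - η'‖ ^ (p - 1) := by
  refine ⟨2 ^ (2 - p), by positivity, fun n _ η η' _ => ?_⟩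
  have h := norm_rpow_sub_one_smul_sub_le (sub_pos.2 hp1) (by linarith) η η'
  rwa [show p - 1 - 1 = p - 2 by ring, show 1 - (p - 1) = 2 - p by ring] at h
end
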